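/- Let α = [0; a_1, ..., a_n, ...] be an irrational number whose partial quotients are all bounded by some constant c. Then there exists a doubly infinite sequence B = (..., b_{-1}, b_0, b_1, ...) of positive integers strongly associated with α, i.e., (i) for every i ≥ 1 the pattern (b_{-i}, ..., b_0, ..., b_i) occurs infinitely often in (a_1, a_2, ...), and (ii) μ(α) = λ_0(B) = M(B). -/

import Mathlib

open Filter

/-- Numerators of the convergents of the continued fraction `[a 0; a 1, a 2, ...]`. -/
def cfNum (a : ℕ → ℤ) : ℕ → ℤ
  | 0 => a 0
  | 1 => a 1 * a 0 + 1
  | n + 2 => a (n + 2) * cfNum a (n + 1) + cfNum a n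

/-- Denominators of the convergents of the continued fraction `[a 0; a 1, a 2, ...]`. -/
def cfDen (a : ℕ → ℤ) : ℕ → ℤ
  | 0 => 1
  | 1 => a 1
  | n + 2 => a (n + 2) * cfDen a (n + 1) + cfDen a n

/-- Value of the infinite continued fraction `[a 0; a 1, a 2, ...]`, as the limit of
its convergents. -/
noncomputable def cfVal (a : ℕ → ℤ) : ℝ :=
  limUnder atTop fun n => (cfNum a n : ℝ) / (cfDen a n : ℝ)

/-- Value of the infinite continued fraction `[0; s 0, s 1, s 2, ...]`. -/
noncomputable def cfZero (s : ℕ → ℤ) : ℝ :=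
  cfVal fun n => if n = 0 then 0 else s (n - 1)

/-- Value of the finite continued fraction `[0; l]`. -/
noncomputable def cfFin : List ℤ → ℝ
  | [] => 0
  | x :: xs => 1 / ((x : ℝ) + cfFin xs)

/-- `λ_i(α) = [a_i; a_{i+1}, ...] + [0; a_{i-1}, ..., a_1]` for `α = [a 0; a 1, a 2, ...]`. -/
noncomputable def lambdaCF (a : ℕ → ℤ) (i : ℕ) : ℝ :=
  cfVal (fun n => a (i + n)) + cfFin ((List.range (i - 1)).map fun j => a (i - 1 - j))

/-- `λ_i(B) = [b_i; b_{i-1}, ...] + [0; b_{i+1}, ...]` for a doubly infinite sequence. -/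
noncomputable def lambdaZ (b : ℤ → ℤ) (i : ℤ) : ℝ :=
  cfVal (fun n => b (i - n)) + cfVal fun n => if n = 0 then 0 else b (i + n)

/-- `M(B) = sup_i λ_i(B)`. -/
noncomputable def MZ (b : ℤ → ℤ) : ℝ := ⨆ i : ℤ, lambdaZ b i

/-- The Lagrange constant `μ(α)`, defined by
`μ(α)⁻¹ = liminf_{p ∈ ℤ, q ∈ ℕ} |q (q α - p)|`. -/
noncomputable def lagrangeConst (α : ℝ) : ℝ :=
  (liminf (fun q : ℕ => ⨅ p : ℤ, |(q : ℝ) * ((q : ℝ) * α - (p : ℝ))|) atTop)⁻¹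

/-- `α` is attainable: `|α - p/q| ≤ 1/(μ(α) q²)` has infinitely many integer solutions. -/
def Attainable (α : ℝ) : Prop :=
  {pq : ℤ × ℤ | 0 < pq.2 ∧
    |α - (pq.1 : ℝ) / (pq.2 : ℝ)| ≤ 1 / (lagrangeConst α * (pq.2 : ℝ) ^ 2)}.Infinite

/-- The Lagrange spectrum: the set of values of `μ(α)` over irrational `α`. -/
def LagrangeSpectrum : Set ℝ := {x | ∃ α : ℝ, Irrational α ∧ lagrangeConst α = x}

/-- The doubly infinite sequence `b` is weakly associated with the number whose partial
quotients are `a 1, a 2, ...`: every central pattern `(b_{-i}, ..., b_i)` occurs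
infinitely often in `(a 1, a 2, ...)`. -/
def WeaklyAssoc (b : ℤ → ℤ) (a : ℕ → ℤ) : Prop :=
  ∀ i : ℕ, ∃ᶠ k in atTop, ∀ j : ℕ, j ≤ 2 * i → a (k + 1 + j) = b ((j : ℤ) - (i : ℤ))

/-!
Write `λ_n` for `λ_n(α)` and `q_n` for the denominators of the convergents. The classical
identity `q_{n+1} |q_{n+1} α - p_{n+1}| = λ_{n+2}⁻¹`, together with the best approximation
property of convergents (every `Q` with `q_n ≤ Q < q_{n+1}` does no better than `q_n`), gives
`μ(α) = limsup λ_n`.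

Choose an ultrafilter `U` on `ℕ`, finer than `atTop`, along which `λ_{m+2} → μ(α)`. As the
partial quotients take finitely many values, the shifted sequences `t ↦ a_{m+2+t}` converge
coordinatewise along `U` to some `B`, and every finite window of `B` is a window of `α` for
`U`-almost every `m`; in particular each pattern of `B` occurs infinitely often. Continued
fractions sharing their first `r` quotients are `O(2⁻ʳ)`-close, so `λ_{m+i+2} → λ_i(B)` along
`U`. For `i = 0` the limit is `μ(α)`; for every `i` it is a cluster value of `(λ_n)`, hence at
most `μ(α)`.
-/

open Topology Set

def CFAdmissible (s : ℕ → ℤ) : Prop := ∀ n, 1 ≤ n → 1 ≤ s n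

noncomputable def cfConv (s : ℕ → ℤ) (n : ℕ) : ℝ := cfNum s n / cfDen s n

section Convergents

variable {s t : ℕ → ℤ}

theorem CFAdmissible.shift (hs : CFAdmissible s) (k : ℕ) : CFAdmissible fun n => s (k + n) :=
  fun n hn => hs (k + n) (by omega)

theorem cfNum_add_two (s : ℕ → ℤ) (n : ℕ) :
    cfNum s (n + 2) = s (n + 2) * cfNum s (n + 1) + cfNum s n := rfl

theorem cfDen_add_two (s : ℕ → ℤ) (n : ℕ) :
    cfDen s (n + 2) = s (n + 2) * cfDen s (n + 1) + cfDen s n := rfl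

theorem cfDen_pos (hs : CFAdmissible s) : ∀ n, 0 < cfDen s n
  | 0 => by simp [cfDen]
  | 1 => by have := hs 1 le_rfl; simp only [cfDen]; omega
  | n + 2 => by
    have := hs (n + 2) (by omega)
    have := cfDen_pos hs n
    have := cfDen_pos hs (n + 1)
    rw [cfDen_add_two]
    nlinarith

theorem cfDen_le_succ (hs : CFAdmissible s) : ∀ n, cfDen s n ≤ cfDen s (n + 1)
  | 0 => by simpa [cfDen] using hs 1 le_rfl
  | n + 1 => by
    have := hs (n + 2) (by omega)
    have := cfDen_pos hs n
    have := cfDen_pos hs (n + 1)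
    rw [cfDen_add_two]
    nlinarith

theorem two_pow_le_cfDen_mul_cfDen_succ (hs : CFAdmissible s) :
    ∀ n, 2 ^ n ≤ cfDen s n * cfDen s (n + 1)
  | 0 => by simpa [cfDen] using hs 1 le_rfl
  | n + 1 => by
    have ih := two_pow_le_cfDen_mul_cfDen_succ hs n
    have hq := (cfDen_pos hs (n + 1)).le
    have h1 : cfDen s n * cfDen s (n + 1) ≤ cfDen s (n + 1) * cfDen s (n + 1) :=
      mul_le_mul_of_nonneg_right (cfDen_le_succ hs n) hq
    have h2 : cfDen s (n + 1) * cfDen s (n + 1) ≤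
        s (n + 2) * (cfDen s (n + 1) * cfDen s (n + 1)) :=
      le_mul_of_one_le_left (mul_nonneg hq hq) (hs (n + 2) (by omega))
    rw [cfDen_add_two, pow_succ]
    nlinarith

theorem natCast_le_cfDen (hs : CFAdmissible s) : ∀ n : ℕ, (n : ℤ) ≤ cfDen s n
  | 0 => by simp [cfDen]
  | 1 => by simpa [cfDen] using hs 1 le_rfl
  | n + 2 => by
    have := hs (n + 2) (by omega)
    have := cfDen_pos hs n
    have := cfDen_pos hs (n + 1)
    have : (n : ℤ) + 1 ≤ cfDen s (n + 1) := by exact_mod_cast natCast_le_cfDen hs (n + 1)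
    rw [cfDen_add_two]
    push_cast
    nlinarith

theorem cfNum_mul_cfDen_sub (s : ℕ → ℤ) :
    ∀ n, cfNum s (n + 1) * cfDen s n - cfNum s n * cfDen s (n + 1) = (-1) ^ n
  | 0 => by simp [cfNum, cfDen]; ring
  | n + 1 => by
    rw [cfNum_add_two, cfDen_add_two, pow_succ, ← cfNum_mul_cfDen_sub s n]
    ring

theorem cfConv_succ_sub (hs : CFAdmissible s) (n : ℕ) :
    cfConv s (n + 1) - cfConv s n = (-1) ^ n / (cfDen s n * cfDen s (n + 1)) := by
  have h0 : (cfDen s n : ℝ) ≠ 0 := by exact_mod_cast (cfDen_pos hs n).ne'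
  have h1 : (cfDen s (n + 1) : ℝ) ≠ 0 := by exact_mod_cast (cfDen_pos hs (n + 1)).ne'
  have hdet : ((cfNum s (n + 1) * cfDen s n - cfNum s n * cfDen s (n + 1) : ℤ) : ℝ) =
      (-1) ^ n := by
    rw [cfNum_mul_cfDen_sub]; push_cast; ring
  rw [cfConv, cfConv, div_sub_div _ _ h1 h0, ← hdet]
  push_cast
  ring

theorem dist_cfConv_succ_le (hs : CFAdmissible s) (n : ℕ) :
    dist (cfConv s n) (cfConv s (n + 1)) ≤ 2⁻¹ ^ n := by
  have hpos : (0 : ℝ) < cfDen s n * cfDen s (n + 1) := by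
    have := cfDen_pos hs n; have := cfDen_pos hs (n + 1); positivity
  have hpow : (2 : ℝ) ^ n ≤ cfDen s n * cfDen s (n + 1) := by
    exact_mod_cast two_pow_le_cfDen_mul_cfDen_succ hs n
  rw [dist_comm, Real.dist_eq, cfConv_succ_sub hs, abs_div, abs_of_pos hpos, abs_pow, abs_neg,
    abs_one, one_pow, inv_pow]
  rw [← one_div]
  exact one_div_le_one_div_of_le (by positivity) hpow

theorem tendsto_cfConv (hs : CFAdmissible s) : Tendsto (cfConv s) atTop (𝓝 (cfVal s)) :=
  tendsto_nhds_limUnder <| cauchySeq_tendsto_of_complete <|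
    cauchySeq_of_le_geometric 2⁻¹ 1 (by norm_num) (by simpa using dist_cfConv_succ_le hs)

theorem abs_cfVal_sub_cfConv_le (hs : CFAdmissible s) (n : ℕ) :
    |cfVal s - cfConv s n| ≤ 2 * 2⁻¹ ^ n := by
  have := dist_le_of_le_geometric_of_tendsto 2⁻¹ 1 (by norm_num)
    (by simpa using dist_cfConv_succ_le hs) (tendsto_cfConv hs) n
  rw [Real.dist_eq, abs_sub_comm] at this
  convert this using 1
  ring

theorem cfNum_congr : ∀ {n : ℕ}, (∀ j ≤ n, s j = t j) → cfNum s n = cfNum t n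
  | 0, h => by simpa [cfNum] using h 0 le_rfl
  | 1, h => by simp [cfNum, h 0 (by omega), h 1 le_rfl]
  | n + 2, h => by
    rw [cfNum_add_two, cfNum_add_two, h (n + 2) le_rfl,
      cfNum_congr (n := n + 1) fun j hj => h j (by omega), cfNum_congr fun j hj => h j (by omega)]

theorem cfDen_congr : ∀ {n : ℕ}, (∀ j ≤ n, s j = t j) → cfDen s n = cfDen t n
  | 0, _ => rfl
  | 1, h => by simp [cfDen, h 1 le_rfl]
  | n + 2, h => by
    rw [cfDen_add_two, cfDen_add_two, h (n + 2) le_rfl,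
      cfDen_congr (n := n + 1) fun j hj => h j (by omega), cfDen_congr fun j hj => h j (by omega)]

theorem cfConv_congr {n : ℕ} (h : ∀ j ≤ n, s j = t j) : cfConv s n = cfConv t n := by
  rw [cfConv, cfConv, cfNum_congr h, cfDen_congr h]

theorem abs_cfVal_sub_cfVal_le (hs : CFAdmissible s) (ht : CFAdmissible t) {r : ℕ}
    (h : ∀ j ≤ r, s j = t j) : |cfVal s - cfVal t| ≤ 4 * 2⁻¹ ^ r := by
  have hs' := abs_cfVal_sub_cfConv_le hs r
  have ht' := abs_cfVal_sub_cfConv_le ht r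
  rw [cfConv_congr h] at hs'
  have := abs_sub_le (cfVal s) (cfConv t r) (cfVal t)
  rw [abs_sub_comm (cfConv t r)] at this
  linarith

theorem abs_cfVal_sub_cfConv_le_of_eq (hs : CFAdmissible s) (ht : CFAdmissible t) {r n : ℕ}
    (h : ∀ j ≤ r, s j = t j) (hr : r ≤ n) : |cfVal s - cfConv t n| ≤ 6 * 2⁻¹ ^ r := by
  have h1 := abs_cfVal_sub_cfVal_le hs ht h
  have h2 := abs_cfVal_sub_cfConv_le ht n
  have h3 : (2 : ℝ)⁻¹ ^ n ≤ 2⁻¹ ^ r := pow_le_pow_of_le_one (by norm_num) (by norm_num) hr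
  have := abs_sub_le (cfVal s) (cfVal t) (cfConv t n)
  linarith

end Convergents

section Tail

variable {s : ℕ → ℤ}

theorem cfDen_succ_eq_cfNum_tail (s : ℕ → ℤ) :
    ∀ k, cfDen s (k + 1) = cfNum (fun n => s (1 + n)) k
  | 0 => by simp [cfNum, cfDen]
  | 1 => by simp [cfNum, cfDen, add_comm]
  | k + 2 => by
    rw [cfDen_add_two, cfNum_add_two, cfDen_succ_eq_cfNum_tail s (k + 1),
      cfDen_succ_eq_cfNum_tail s k, add_comm 1 (k + 2)]

theorem cfNum_succ_eq_tail (s : ℕ → ℤ) :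
    ∀ k, cfNum s (k + 1) = s 0 * cfNum (fun n => s (1 + n)) k + cfDen (fun n => s (1 + n)) k
  | 0 => by simp [cfNum, cfDen]; ring
  | 1 => by simp [cfNum, cfDen, add_comm]; ring
  | k + 2 => by
    rw [cfNum_add_two, cfNum_succ_eq_tail s (k + 1), cfNum_succ_eq_tail s k, cfNum_add_two,
      cfDen_add_two, add_comm 1 (k + 2)]
    ring

theorem cfConv_tail_pos (hs : CFAdmissible s) (k : ℕ) :
    0 < cfConv (fun n => s (1 + n)) k := by
  have h1 := cfDen_pos hs (k + 1)
  have h2 := cfDen_pos (hs.shift 1) k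
  rw [cfDen_succ_eq_cfNum_tail] at h1
  unfold cfConv
  positivity

theorem cfConv_succ (hs : CFAdmissible s) (k : ℕ) :
    cfConv s (k + 1) = s 0 + (cfConv (fun n => s (1 + n)) k)⁻¹ := by
  have h1 : (cfNum (fun n => s (1 + n)) k : ℝ) ≠ 0 := by
    rw [← cfDen_succ_eq_cfNum_tail]; exact_mod_cast (cfDen_pos hs (k + 1)).ne'
  rw [cfConv, cfConv, cfNum_succ_eq_tail, cfDen_succ_eq_cfNum_tail, inv_div]
  push_cast
  field_simp

theorem head_le_cfConv (hs : CFAdmissible s) : ∀ n, (s 0 : ℝ) ≤ cfConv s n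
  | 0 => by simp [cfConv, cfNum, cfDen]
  | k + 1 => by
    rw [cfConv_succ hs]
    have := cfConv_tail_pos hs k
    have : 0 ≤ (cfConv (fun n => s (1 + n)) k)⁻¹ := by positivity
    linarith

theorem head_le_cfVal (hs : CFAdmissible s) : (s 0 : ℝ) ≤ cfVal s :=
  ge_of_tendsto' (tendsto_cfConv hs) (head_le_cfConv hs)

theorem one_le_cfVal (hs : ∀ n, 1 ≤ s n) : 1 ≤ cfVal s := by
  have := head_le_cfVal fun n _ => hs n
  have : (1 : ℝ) ≤ s 0 := by exact_mod_cast hs 0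
  linarith

theorem cfVal_eq_add_inv (hs : CFAdmissible s) :
    cfVal s = s 0 + (cfVal fun n => s (1 + n))⁻¹ := by
  have htail : 1 ≤ cfVal fun n => s (1 + n) := one_le_cfVal fun n => hs (1 + n) (by omega)
  have hlim := ((tendsto_cfConv (hs.shift 1)).inv₀ (by positivity)).const_add (s 0 : ℝ)
  refine tendsto_nhds_unique ((tendsto_add_atTop_iff_nat 1).2 (tendsto_cfConv hs)) ?_
  simpa only [cfConv_succ hs] using hlim

theorem cfVal_le_head_add_one (hs : CFAdmissible s) : cfVal s ≤ s 0 + 1 := by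
  have htail : 1 ≤ cfVal fun n => s (1 + n) := one_le_cfVal fun n => hs (1 + n) (by omega)
  rw [cfVal_eq_add_inv hs]
  have := inv_le_one_of_one_le₀ htail
  linarith

/-- Padded with `1`s so that it stays admissible; `cfConv _ m` only sees `s (m + 1), …, s 1`. -/
def revPrefix (s : ℕ → ℤ) (m : ℕ) : ℕ → ℤ :=
  fun j => if j ≤ m then s (m + 1 - j) else 1

theorem one_le_revPrefix (hs : CFAdmissible s) (m : ℕ) : ∀ j, 1 ≤ revPrefix s m j := by
  intro j
  unfold revPrefix
  split_ifs
  · exact hs _ (by omega)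
  · exact le_rfl

theorem cfConv_revPrefix (hs : CFAdmissible s) :
    ∀ m, cfConv (revPrefix s m) m = cfDen s (m + 1) / cfDen s m
  | 0 => by simp [cfConv, revPrefix, cfNum, cfDen]
  | m + 1 => by
    have htail : (fun n => revPrefix s (m + 1) (1 + n)) = revPrefix s m := by
      funext j
      simp only [revPrefix]
      split_ifs <;> first | omega | (congr 1; omega)
    rw [cfConv_succ fun j _ => one_le_revPrefix hs (m + 1) j, htail, cfConv_revPrefix hs m,
      inv_div, cfDen_add_two]
    have := cfDen_pos hs m
    have := cfDen_pos hs (m + 1)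
    simp only [revPrefix, if_true, zero_le, Nat.sub_zero]
    push_cast
    field_simp

end Tail

noncomputable def cfTail (s : ℕ → ℤ) (k : ℕ) : ℝ := cfVal fun n => s (k + n)

/-- `cfLambda s n` is the paper's `λ_{n+2}`: by `cfConv_revPrefix`, `q_n / q_{n+1}` is
`[0; s (n+1), …, s 1]`. -/
noncomputable def cfLambda (s : ℕ → ℤ) (n : ℕ) : ℝ :=
  cfTail s (n + 2) + cfDen s n / cfDen s (n + 1)

noncomputable def cfErr (s : ℕ → ℤ) (n : ℕ) : ℝ := cfDen s n * cfVal s - cfNum s n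

section Approximation

variable {s : ℕ → ℤ}

theorem cfTail_zero (s : ℕ → ℤ) : cfTail s 0 = cfVal s := by
  simp [cfTail]

theorem cfTail_eq_add_inv (hs : CFAdmissible s) (k : ℕ) :
    cfTail s k = s k + (cfTail s (k + 1))⁻¹ := by
  rw [cfTail, cfVal_eq_add_inv (hs.shift k), cfTail]
  simp only [add_zero, add_assoc]

theorem one_le_cfTail (hs : CFAdmissible s) {k : ℕ} (hk : 1 ≤ k) : 1 ≤ cfTail s k :=
  one_le_cfVal fun n => hs (k + n) (by omega)

theorem cfDen_mul_cfVal (hs : CFAdmissible s) : ∀ n,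
    (cfDen s (n + 1) * cfTail s (n + 2) + cfDen s n) * cfVal s =
      cfNum s (n + 1) * cfTail s (n + 2) + cfNum s n
  | 0 => by
    have h1 := cfTail_eq_add_inv hs 1
    have h0 := cfTail_eq_add_inv hs 0
    have p1 := one_le_cfTail hs le_rfl
    have p2 := one_le_cfTail hs (k := 2) (by norm_num)
    rw [cfTail_zero] at h0
    rw [h0]
    simp only [cfNum, cfDen]
    push_cast
    field_simp
    rw [h1]
    field_simp
    ring
  | n + 1 => by
    have ih := cfDen_mul_cfVal hs n
    have e := cfTail_eq_add_inv hs (n + 2)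
    have p := one_le_cfTail hs (k := n + 3) (by omega)
    rw [cfNum_add_two, cfDen_add_two]
    push_cast
    rw [e] at ih
    field_simp at ih
    linear_combination ih

theorem cfErr_succ (hs : CFAdmissible s) (n : ℕ) :
    cfErr s (n + 1) = (-1) ^ (n + 1) / (cfDen s (n + 1) * cfTail s (n + 2) + cfDen s n) := by
  have := cfDen_pos hs n
  have := cfDen_pos hs (n + 1)
  have := one_le_cfTail hs (k := n + 2) (by omega)
  have hdet : ((cfNum s (n + 1) * cfDen s n - cfNum s n * cfDen s (n + 1) : ℤ) : ℝ) =
      (-1) ^ n := by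
    rw [cfNum_mul_cfDen_sub]; push_cast; ring
  push_cast at hdet
  rw [cfErr, eq_div_iff (by positivity)]
  linear_combination (cfDen s (n + 1) : ℝ) * cfDen_mul_cfVal hs n - hdet

theorem cfErr_zero (hs : CFAdmissible s) : cfErr s 0 = (cfTail s 1)⁻¹ := by
  rw [cfErr, ← cfTail_zero, cfTail_eq_add_inv hs 0]
  simp [cfNum, cfDen]

theorem neg_one_pow_mul_cfErr_pos (hs : CFAdmissible s) :
    ∀ n, 0 < (-1) ^ n * cfErr s n
  | 0 => by
    rw [cfErr_zero hs, pow_zero, one_mul]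
    exact inv_pos.2 (zero_lt_one.trans_le (one_le_cfTail hs le_rfl))
  | n + 1 => by
    have := cfDen_pos hs n
    have := cfDen_pos hs (n + 1)
    have := one_le_cfTail hs (k := n + 2) (by omega)
    rw [cfErr_succ hs, mul_div_assoc', ← pow_add, ← two_mul, pow_mul, neg_one_sq, one_pow]
    positivity

theorem cfDen_mul_abs_cfErr (hs : CFAdmissible s) (n : ℕ) :
    cfDen s (n + 1) * |cfErr s (n + 1)| = (cfLambda s n)⁻¹ := by
  have := cfDen_pos hs n
  have := cfDen_pos hs (n + 1)
  have := one_le_cfTail hs (k := n + 2) (by omega)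
  rw [cfErr_succ hs, abs_div, abs_pow, abs_neg, abs_one, one_pow, abs_of_pos (by positivity),
    cfLambda]
  field_simp

theorem one_le_cfLambda (hs : CFAdmissible s) (n : ℕ) : 1 ≤ cfLambda s n := by
  have := cfDen_pos hs n
  have := cfDen_pos hs (n + 1)
  have := one_le_cfTail hs (k := n + 2) (by omega)
  have : (0 : ℝ) ≤ cfDen s n / cfDen s (n + 1) := by positivity
  rw [cfLambda]
  linarith

theorem cfLambda_le {c : ℤ} (hs : CFAdmissible s) (hc : ∀ n, 1 ≤ n → s n ≤ c) (n : ℕ) :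
    cfLambda s n ≤ c + 2 := by
  have htail := cfVal_le_head_add_one (hs.shift (n + 2))
  have hc' : (s (n + 2) : ℝ) ≤ c := by exact_mod_cast hc (n + 2) (by omega)
  have hq : (cfDen s n : ℝ) / cfDen s (n + 1) ≤ 1 := by
    rw [div_le_one (by exact_mod_cast cfDen_pos hs (n + 1))]
    exact_mod_cast cfDen_le_succ hs n
  simp only [add_zero] at htail
  rw [cfLambda, cfTail]
  linarith

theorem abs_le_abs_mul_add_mul {x y : ℤ} {u v : ℝ} (hx : x ≠ 0) (hxy : x * y ≤ 0)
    (huv : u * v ≤ 0) : |u| ≤ |x * u + y * v| := by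
  have hxy' : (x : ℝ) * y ≤ 0 := by exact_mod_cast hxy
  have hx1 : (1 : ℝ) ≤ |(x : ℝ)| := by exact_mod_cast Int.one_le_abs hx
  have hsq : (x * u) ^ 2 ≤ (x * u + y * v) ^ 2 := by
    nlinarith [mul_nonneg_of_nonpos_of_nonpos hxy' huv, sq_nonneg (y * v)]
  calc |u| ≤ |(x : ℝ)| * |u| := le_mul_of_one_le_left (abs_nonneg u) hx1
    _ = |x * u| := (abs_mul _ _).symm
    _ ≤ |x * u + y * v| := sq_le_sq.1 hsq

theorem exists_cfDen_cfNum_comb (s : ℕ → ℤ) (n : ℕ) (P Q : ℤ) : ∃ x y : ℤ,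
    x * cfDen s n + y * cfDen s (n + 1) = Q ∧ x * cfNum s n + y * cfNum s (n + 1) = P := by
  have hdet := cfNum_mul_cfDen_sub s n
  have hd : ((-1 : ℤ) ^ n) * (-1) ^ n = 1 := by rw [← pow_add, ← two_mul, pow_mul]; norm_num
  refine ⟨(-1) ^ n * (Q * cfNum s (n + 1) - P * cfDen s (n + 1)),
    (-1) ^ n * (P * cfDen s n - Q * cfNum s n), ?_, ?_⟩
  · linear_combination ((-1) ^ n * Q) * hdet + Q * hd
  · linear_combination ((-1) ^ n * P) * hdet + P * hd

/-- Write `(Q, P)` in the unimodular basis `(q_n, p_n), (q_{n+1}, p_{n+1})`: the coefficients have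
opposite signs, and so do `cfErr s n` and `cfErr s (n + 1)`, so the two terms cannot cancel. -/
theorem abs_cfErr_le (hs : CFAdmissible s) {n : ℕ} {P Q : ℤ} (hQ : cfDen s n ≤ Q)
    (hQ' : Q < cfDen s (n + 1)) :
    |cfErr s n| ≤ |Q * cfVal s - P| := by
  obtain ⟨x, y, hxQ, hyP⟩ := exists_cfDen_cfNum_comb s n P Q
  have hq0 := cfDen_pos hs n
  have hq1 := cfDen_pos hs (n + 1)
  have hx : x ≠ 0 := by
    rintro rfl
    rcases le_or_gt y 0 with hy | hy <;> nlinarith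
  have hxy : x * y ≤ 0 := by
    by_contra! h
    rcases lt_or_gt_of_ne hx with hx' | hx'
    · nlinarith [neg_pos.2 hx', neg_pos.2 (neg_of_mul_pos_right h hx'.le)]
    · nlinarith [pos_of_mul_pos_right h hx'.le]
  have huv : cfErr s n * cfErr s (n + 1) ≤ 0 := by
    have h0 := neg_one_pow_mul_cfErr_pos hs n
    have h1 := neg_one_pow_mul_cfErr_pos hs (n + 1)
    have hsq : ((-1 : ℝ) ^ n) ^ 2 = 1 := by rw [← pow_mul, mul_comm, pow_mul]; norm_num
    rw [pow_succ] at h1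
    nlinarith [mul_pos h0 h1]
  have hsplit : (Q : ℝ) * cfVal s - P = x * cfErr s n + y * cfErr s (n + 1) := by
    rw [cfErr, cfErr, ← hxQ, ← hyP]; push_cast; ring
  rw [hsplit]
  exact abs_le_abs_mul_add_mul hx hxy huv

end Approximation

/-- The sequence whose `liminf` is `(lagrangeConst α)⁻¹`. -/
noncomputable def lagrangeErr (α : ℝ) (q : ℕ) : ℝ :=
  ⨅ p : ℤ, |(q : ℝ) * ((q : ℝ) * α - (p : ℝ))|

theorem lagrangeErr_nonneg (α : ℝ) (q : ℕ) : 0 ≤ lagrangeErr α q :=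
  le_ciInf fun _ => abs_nonneg _

theorem lagrangeErr_le (α : ℝ) (q : ℕ) (p : ℤ) :
    lagrangeErr α q ≤ |(q : ℝ) * ((q : ℝ) * α - (p : ℝ))| :=
  ciInf_le ⟨0, by rintro _ ⟨p, rfl⟩; positivity⟩ p

/-- The search bound `Q` loses nothing since `n ≤ q_n`. -/
def cfIndex (s : ℕ → ℤ) (Q : ℕ) : ℕ := Nat.findGreatest (fun n => cfDen s n ≤ Q) Q

section LagrangeConstant

variable {s : ℕ → ℤ}

theorem cfDen_cfIndex_le {Q : ℕ} (hQ : 1 ≤ Q) : cfDen s (cfIndex s Q) ≤ Q :=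
  Nat.findGreatest_spec (P := fun n => cfDen s n ≤ Q) (Nat.zero_le Q) (by simpa [cfDen] using hQ)

theorem lt_cfDen_cfIndex_succ (hs : CFAdmissible s) (Q : ℕ) :
    (Q : ℤ) < cfDen s (cfIndex s Q + 1) := by
  by_contra! h
  have hle : cfIndex s Q + 1 ≤ Q := by
    have := natCast_le_cfDen hs (cfIndex s Q + 1)
    omega
  exact Nat.findGreatest_is_greatest (Nat.lt_succ_self _) hle h

theorem tendsto_cfIndex (hs : CFAdmissible s) : Tendsto (cfIndex s) atTop atTop :=
  tendsto_atTop_atTop.2 fun N => ⟨(cfDen s N).toNat, fun Q hQ =>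
    Nat.le_findGreatest (by have := natCast_le_cfDen hs N; omega) (by omega)⟩

theorem lagrangeErr_cfDen_le (hs : CFAdmissible s) (n : ℕ) :
    lagrangeErr (cfVal s) (cfDen s (n + 1)).toNat ≤ (cfLambda s n)⁻¹ := by
  have hq := cfDen_pos hs (n + 1)
  have hcast : (((cfDen s (n + 1)).toNat : ℕ) : ℝ) = cfDen s (n + 1) := by
    exact_mod_cast Int.toNat_of_nonneg hq.le
  refine (lagrangeErr_le _ _ (cfNum s (n + 1))).trans_eq ?_
  rw [hcast, abs_mul, abs_of_pos (by exact_mod_cast hq), ← cfErr, cfDen_mul_abs_cfErr hs]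

theorem inv_cfLambda_le_lagrangeErr (hs : CFAdmissible s) {n Q : ℕ} (hQ : cfDen s (n + 1) ≤ Q)
    (hQ' : (Q : ℤ) < cfDen s (n + 2)) : (cfLambda s n)⁻¹ ≤ lagrangeErr (cfVal s) Q := by
  refine le_ciInf fun p => ?_
  have hqQ : (cfDen s (n + 1) : ℝ) ≤ Q := by exact_mod_cast hQ
  rw [← cfDen_mul_abs_cfErr hs, abs_mul, Nat.abs_cast]
  calc (cfDen s (n + 1) : ℝ) * |cfErr s (n + 1)| ≤ Q * |cfErr s (n + 1)| := by gcongr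
    _ ≤ Q * |Q * cfVal s - p| := mul_le_mul_of_nonneg_left
        (by exact_mod_cast abs_cfErr_le hs (P := p) hQ hQ') (Nat.cast_nonneg Q)

theorem eventually_inv_cfLambda_le_lagrangeErr (hs : CFAdmissible s) :
    ∀ᶠ Q in atTop, (cfLambda s (cfIndex s Q - 1))⁻¹ ≤ lagrangeErr (cfVal s) Q := by
  filter_upwards [(tendsto_cfIndex hs).eventually_ge_atTop 1] with Q hQ
  have h1 := cfDen_cfIndex_le (s := s) (hQ.trans (Nat.findGreatest_le Q))
  have h2 := lt_cfDen_cfIndex_succ hs Q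
  obtain ⟨n, hn⟩ : ∃ n, cfIndex s Q = n + 1 := ⟨cfIndex s Q - 1, by omega⟩
  rw [hn] at h1 h2
  simpa [hn] using inv_cfLambda_le_lagrangeErr hs h1 h2

theorem liminf_lagrangeErr (hs : CFAdmissible s) :
    liminf (lagrangeErr (cfVal s)) atTop = liminf (fun n => (cfLambda s n)⁻¹) atTop := by
  set f := lagrangeErr (cfVal s)
  set g := fun n => (cfLambda s n)⁻¹
  have hg0 : ∀ n, 0 ≤ g n := fun n => inv_nonneg.2 (zero_le_one.trans (one_le_cfLambda hs n))
  have hg1 : ∀ n, g n ≤ 1 := fun n => inv_le_one_of_one_le₀ (one_le_cfLambda hs n)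
  set φ := fun n => (cfDen s (n + 1)).toNat
  have hφ : Tendsto φ atTop atTop := tendsto_atTop_mono (fun n => by
    have := natCast_le_cfDen hs (n + 1); simp only [φ, id]; omega) tendsto_id
  have hfφ : ∀ n, f (φ n) ≤ g n := lagrangeErr_cfDen_le hs
  have hψ : Tendsto (fun Q => cfIndex s Q - 1) atTop atTop :=
    (tendsto_sub_atTop_nat 1).comp (tendsto_cfIndex hs)
  have hgψ : ∀ᶠ Q in atTop, g (cfIndex s Q - 1) ≤ f Q :=
    eventually_inv_cfLambda_le_lagrangeErr hs
  apply le_antisymm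
  · calc liminf f atTop ≤ liminf (f ∘ φ) atTop :=
          hφ.liminf_le_liminf_comp
            (isCoboundedUnder_ge_of_eventually_le _ (eventually_map.2 (.of_forall fun n =>
              (hfφ n).trans (hg1 n))))
            (isBoundedUnder_of ⟨0, lagrangeErr_nonneg _⟩)
      _ ≤ liminf g atTop :=
          liminf_le_liminf (.of_forall hfφ)
            (isBoundedUnder_of ⟨0, fun n => lagrangeErr_nonneg _ _⟩)
            (isCoboundedUnder_ge_of_le _ hg1)
  · calc liminf g atTop ≤ liminf (g ∘ fun Q => cfIndex s Q - 1) atTop :=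
          hψ.liminf_le_liminf_comp (isCoboundedUnder_ge_of_le _ hg1)
            (isBoundedUnder_of ⟨0, hg0⟩)
      _ ≤ liminf f atTop :=
          liminf_le_liminf hgψ (isBoundedUnder_of ⟨0, fun n => hg0 _⟩)
            (IsCoboundedUnder.of_frequently_le (a := 1)
              (hφ.frequently (.of_forall fun n => (hfφ n).trans (hg1 n))))

theorem liminf_inv_cfLambda {c : ℤ} (hs : CFAdmissible s) (hc : ∀ n, 1 ≤ n → s n ≤ c) :
    liminf (fun n => (cfLambda s n)⁻¹) atTop = (limsup (cfLambda s) atTop)⁻¹ := by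
  have hbdd : IsBoundedUnder (· ≤ ·) atTop (cfLambda s) :=
    isBoundedUnder_of ⟨c + 2, cfLambda_le hs hc⟩
  have hcobdd : IsCoboundedUnder (· ≤ ·) atTop (cfLambda s) :=
    isCoboundedUnder_le_of_le _ (one_le_cfLambda hs)
  have hL : 1 ≤ limsup (cfLambda s) atTop :=
    le_limsup_of_frequently_le (.of_forall (one_le_cfLambda hs)) hbdd
  -- `x ↦ (max x 1)⁻¹` is antitone on `ℝ`, unlike `x ↦ x⁻¹`, and agrees with it on `[1, ∞)`
  have hanti : Antitone fun x : ℝ => (max x 1)⁻¹ := fun x y hxy =>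
    inv_anti₀ (zero_lt_one.trans_le (le_max_right _ _)) (max_le_max hxy le_rfl)
  have hcont : Continuous fun x : ℝ => (max x 1)⁻¹ :=
    (continuous_id.max continuous_const).inv₀ fun x =>
      (zero_lt_one.trans_le (le_max_right x 1)).ne'
  have := hanti.map_limsup_of_continuousAt (cfLambda s) hcont.continuousAt hbdd hcobdd
  simp only [max_eq_left hL] at this
  rw [this]
  congr 1
  funext n
  simp [max_eq_left (one_le_cfLambda hs n)]

theorem lagrangeConst_cfVal {c : ℤ} (hs : CFAdmissible s) (hc : ∀ n, 1 ≤ n → s n ≤ c) :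
    lagrangeConst (cfVal s) = limsup (cfLambda s) atTop := by
  change (liminf (lagrangeErr (cfVal s)) atTop)⁻¹ = _
  rw [liminf_lagrangeErr hs, liminf_inv_cfLambda hs hc, inv_inv]

end LagrangeConstant

theorem abs_inv_sub_inv_le {x y : ℝ} (hx : 1 ≤ x) (hy : 1 ≤ y) :
    |x⁻¹ - y⁻¹| ≤ |x - y| := by
  have hxy : 1 ≤ x * y := one_le_mul_of_one_le_of_one_le hx hy
  rw [inv_sub_inv (by positivity) (by positivity), abs_div, abs_sub_comm,
    abs_of_pos (by positivity : 0 < x * y)]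
  exact div_le_self (abs_nonneg _) hxy

/-- Centred at `s (m + 2)` to match `cfLambda s m`; positions before `s 0` read `s 0`. -/
def centredShift (s : ℕ → ℤ) (m : ℕ) (t : ℤ) : ℤ := s ((m : ℤ) + 2 + t).toNat

section DoublyInfinite

variable {s : ℕ → ℤ} {b : ℤ → ℤ}

theorem lambdaZ_eq_add_inv (hb : ∀ t, 1 ≤ b t) (i : ℤ) : lambdaZ b i =
    b i + (cfVal fun n => b (i - 1 - n))⁻¹ + (cfVal fun n => b (i + 1 + n))⁻¹ := by
  have hback : (cfVal fun n => b (i - n)) = b i + (cfVal fun n => b (i - 1 - n))⁻¹ := by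
    rw [cfVal_eq_add_inv fun n _ => hb _]
    simp [sub_sub]
  have hfwd : (cfVal fun n => if n = 0 then 0 else b (i + n)) =
      (cfVal fun n => b (i + 1 + n))⁻¹ := by
    rw [cfVal_eq_add_inv fun n hn => by simpa [show n ≠ 0 by omega] using hb (i + n)]
    simp [add_assoc]
  rw [lambdaZ, hback, hfwd]

theorem cfLambda_eq_add_inv (hs : CFAdmissible s) (n : ℕ) :
    cfLambda s n = s (n + 2) + (cfConv (revPrefix s n) n)⁻¹ + (cfTail s (n + 3))⁻¹ := by
  rw [cfLambda, cfTail_eq_add_inv hs, cfConv_revPrefix hs, inv_div]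
  ring

theorem abs_lambdaZ_sub_cfLambda_le (hs : CFAdmissible s) (hb : ∀ t, 1 ≤ b t) {i : ℤ}
    {n r : ℕ} (hr : r ≤ n) (hcenter : b i = s (n + 2))
    (hfwd : ∀ j ≤ r, b (i + 1 + j) = s (n + 3 + j))
    (hbwd : ∀ j ≤ r, b (i - 1 - j) = s (n + 1 - j)) :
    |lambdaZ b i - cfLambda s n| ≤ 10 * 2⁻¹ ^ r := by
  have hback' : 1 ≤ cfConv (revPrefix s n) n := by
    rw [cfConv_revPrefix hs, one_le_div (by exact_mod_cast cfDen_pos hs n)]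
    exact_mod_cast cfDen_le_succ hs n
  set back : ℝ := cfVal fun j => b (i - 1 - j)
  set fwd : ℝ := cfVal fun j => b (i + 1 + j)
  set back' := cfConv (revPrefix s n) n
  set fwd' := cfTail s (n + 3)
  have hback : |back - back'| ≤ 6 * 2⁻¹ ^ r :=
    abs_cfVal_sub_cfConv_le_of_eq (fun _ _ => hb _) (fun j _ => one_le_revPrefix hs n j)
      (fun j hj => by rw [hbwd j hj, revPrefix, if_pos (hj.trans hr)]) hr
  have hfwd' : |fwd - fwd'| ≤ 4 * 2⁻¹ ^ r :=
    abs_cfVal_sub_cfVal_le (fun _ _ => hb _) (hs.shift (n + 3)) fun j hj => hfwd j hj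
  have e1 : |back⁻¹ - back'⁻¹| ≤ |back - back'| :=
    abs_inv_sub_inv_le (one_le_cfVal fun _ => hb _) hback'
  have e2 : |fwd⁻¹ - fwd'⁻¹| ≤ |fwd - fwd'| :=
    abs_inv_sub_inv_le (one_le_cfVal fun _ => hb _) (one_le_cfTail hs (by omega))
  rw [lambdaZ_eq_add_inv hb, cfLambda_eq_add_inv hs, hcenter]
  calc |(s (n + 2) : ℝ) + back⁻¹ + fwd⁻¹ - (s (n + 2) + back'⁻¹ + fwd'⁻¹)|
      = |(back⁻¹ - back'⁻¹) + (fwd⁻¹ - fwd'⁻¹)| := by ring_nf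
    _ ≤ |back⁻¹ - back'⁻¹| + |fwd⁻¹ - fwd'⁻¹| := abs_add_le _ _
    _ ≤ 10 * 2⁻¹ ^ r := by linarith

theorem tendsto_cfLambda_lambdaZ {l : Filter ℕ} (hl : l ≤ atTop) (hs : CFAdmissible s)
    (hb : ∀ t, 1 ≤ b t) (hlim : ∀ t, ∀ᶠ m in l, centredShift s m t = b t) (i : ℤ) :
    Tendsto (fun m : ℕ => cfLambda s ((m : ℤ) + i).toNat) l (𝓝 (lambdaZ b i)) := by
  refine Metric.tendsto_nhds.2 fun ε hε => ?_
  obtain ⟨r, hr⟩ := exists_pow_lt_of_lt_one (div_pos hε (by norm_num : (0 : ℝ) < 10))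
    (by norm_num : (2 : ℝ)⁻¹ < 1)
  have hwin : ∀ᶠ m in l, ∀ t ∈ Icc (i - r - 1) (i + r + 1), centredShift s m t = b t :=
    (finite_Icc _ _).eventually_all.2 fun t _ => hlim t
  filter_upwards [hwin, hl (eventually_ge_atTop (r + 1 + i.natAbs))] with m hw hm
  set n := ((m : ℤ) + i).toNat
  have hb_eq : ∀ d : ℤ, |d| ≤ r + 1 → b (i + d) = s (n + 2 + d).toNat := by
    intro d hd
    rw [abs_le] at hd
    rw [← hw (i + d) ⟨by omega, by omega⟩, centredShift]
    congr 1
    omega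
  rw [Real.dist_eq, abs_sub_comm]
  refine lt_of_le_of_lt (abs_lambdaZ_sub_cfLambda_le (r := r) hs hb (by omega) ?_ ?_ ?_) ?_
  · rw [← add_zero i, hb_eq 0 (by positivity)]; rfl
  · intro j hj
    rw [add_assoc, hb_eq (1 + j) (by rw [abs_le]; omega)]; congr 1; omega
  · intro j hj
    rw [show i - 1 - (j : ℤ) = i + -(1 + j) by ring, hb_eq (-(1 + j)) (by rw [abs_le]; omega)]
    congr 1; omega
  · linarith

theorem exists_ultralimit_centredShift {c : ℤ} (ha : ∀ n, 1 ≤ n → 1 ≤ s n ∧ s n ≤ c)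
    (U : Ultrafilter ℕ) (hU : (U : Filter ℕ) ≤ atTop) :
    ∃ b : ℤ → ℤ, (∀ t, 1 ≤ b t) ∧ ∀ t, ∀ᶠ m in U, centredShift s m t = b t := by
  have h : ∀ t, ∃ v ∈ Icc 1 c, ∀ᶠ m in U, centredShift s m t = v := fun t =>
    (Ultrafilter.eventually_exists_mem_iff (finite_Icc 1 c)).1 <| by
      filter_upwards [hU (eventually_ge_atTop t.natAbs)] with m hm
      exact ⟨_, ha _ (by omega), rfl⟩
  choose b hbc hb using h
  exact ⟨b, fun t => (hbc t).1, hb⟩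

theorem weaklyAssoc_of_eventually_eq {l : Filter ℕ} [NeBot l] (hl : l ≤ atTop)
    (hlim : ∀ t, ∀ᶠ m in l, centredShift s m t = b t) : WeaklyAssoc b s := by
  intro i
  rw [frequently_atTop]
  intro N
  have hwin : ∀ᶠ m in l, ∀ t ∈ Icc (-(i : ℤ)) i, centredShift s m t = b t :=
    (finite_Icc _ _).eventually_all.2 fun t _ => hlim t
  obtain ⟨m, hw, hm⟩ := (hwin.and (hl (eventually_ge_atTop (N + i)))).exists
  refine ⟨m + 1 - i, by omega, fun j hj => ?_⟩
  rw [← hw (j - i) ⟨by omega, by omega⟩, centredShift]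
  congr 1
  omega

end DoublyInfinite

theorem stmt8_general (α : ℝ) (a : ℕ → ℤ)
    (c : ℤ) (ha : ∀ n, 1 ≤ n → 1 ≤ a n ∧ a n ≤ c) (hα : α = cfVal a) :
    ∃ b : ℤ → ℤ, (∀ i, 1 ≤ b i) ∧ WeaklyAssoc b a ∧
      lagrangeConst α = lambdaZ b 0 ∧ lambdaZ b 0 = MZ b := by
  subst hα
  have hs : CFAdmissible a := fun n hn => (ha n hn).1
  have hc : ∀ n, 1 ≤ n → a n ≤ c := fun n hn => (ha n hn).2
  have hbdd : IsBoundedUnder (· ≤ ·) atTop (cfLambda a) :=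
    isBoundedUnder_of ⟨c + 2, cfLambda_le hs hc⟩
  obtain ⟨U, hU, hUlim⟩ := mapClusterPt_iff_ultrafilter.1
    (MapClusterPt.limsup (isCoboundedUnder_le_of_le _ (one_le_cfLambda hs)) hbdd)
  obtain ⟨b, hb, hbU⟩ := exists_ultralimit_centredShift ha U hU
  have hlim := tendsto_cfLambda_lambdaZ hU hs hb hbU
  have hb0 : lambdaZ b 0 = limsup (cfLambda a) atTop :=
    tendsto_nhds_unique (by simpa only [add_zero, Int.toNat_natCast] using hlim 0) hUlim
  have hbi : ∀ i, lambdaZ b i ≤ lambdaZ b 0 := fun i => by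
    have hshift : Tendsto (fun m : ℕ => ((m : ℤ) + i).toNat) U atTop :=
      (tendsto_atTop_atTop.2 fun N => ⟨N + i.natAbs, fun m hm => by omega⟩).mono_left hU
    exact hb0 ▸ (MapClusterPt.of_comp hshift (hlim i).mapClusterPt).le_limsup hbdd
  refine ⟨b, hb, weaklyAssoc_of_eventually_eq hU hbU, ?_, ?_⟩
  · rw [lagrangeConst_cfVal hs hc, hb0]
  · exact le_antisymm (le_ciSup ⟨_, forall_mem_range.2 hbi⟩ 0) (ciSup_le hbi)

/-- Every irrational `α = [0; a 1, a 2, ...]` with partial quotients bounded by `c` has a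
strongly associated doubly infinite sequence `B`: `B` is weakly associated with `α` and
`μ(α) = λ_0(B) = M(B)`. -/
theorem stmt8 (α : ℝ) (hirr : Irrational α) (a : ℕ → ℤ) (h0 : a 0 = 0)
    (c : ℤ) (ha : ∀ n, 1 ≤ n → 1 ≤ a n ∧ a n ≤ c) (hα : α = cfVal a) :
    ∃ b : ℤ → ℤ, (∀ i, 1 ≤ b i) ∧ WeaklyAssoc b a ∧
      lagrangeConst α = lambdaZ b 0 ∧ lambdaZ b 0 = MZ b :=
  stmt8_general α a c ha hα
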